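/- arXiv:1104.0347 — 4 statements merged into one kernel-verified Lean document; each statement's English description precedes it below -/
import Mathlib

section
/- Let E be a real Hilbert space, let H be a closed subspace of E, and let (H_k)_{k∈ℕ} be a sequence of closed subspaces of H such that H_k → H, meaning that for every f ∈ H there exists a sequence (φ_k) with φ_k ∈ H_k and ‖φ_k − f‖ → 0 as k → ∞. Let c ∈ E with c ∉ H, let c̄ be the orthogonal projection of c onto H, and let c̄_k be the orthogonal projection of c onto H_k. Define q = (c − c̄)/‖c − c̄‖² and q_k = (c − c̄_k)/‖c − c̄_k‖². Then ‖q_k − q‖ → 0 as k → ∞. -/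
/-!
Since `H_k ≤ H`, the vector `c̄ - c̄_k = (c - c̄_k) - (c - c̄)` is orthogonal to `H_k`, so `c̄_k` is
the best approximation of `c̄` in `H_k` and `‖c̄ - c̄_k‖ ≤ ‖c̄ - φ_k‖ → 0`. Hence `c - c̄_k → c - c̄ ≠ 0`,
and `q_k → q` by continuity of `v ↦ v / ‖v‖²` away from `0`.
-/

open Filter RealInnerProductSpace

section

variable {E : Type*} [NormedAddCommGroup E] [InnerProductSpace ℝ E]

theorem norm_sub_le_norm_sub_of_inner_eq_zero (K : Submodule ℝ E) {x p φ : E} (hp : p ∈ K)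
    (horth : ∀ f ∈ K, ⟪x - p, f⟫ = 0) (hφ : φ ∈ K) : ‖x - p‖ ≤ ‖x - φ‖ := by
  rw [(K.norm_eq_iInf_iff_real_inner_eq_zero hp).2 horth]
  exact ciInf_le ⟨0, Set.forall_mem_range.2 fun _ => norm_nonneg _⟩ (⟨φ, hφ⟩ : (K : Set E))

theorem inner_sub_eq_zero_of_le {H K : Submodule ℝ E} (hKH : K ≤ H) {c a b : E}
    (ha : ∀ f ∈ H, ⟪c - a, f⟫ = 0) (hb : ∀ f ∈ K, ⟪c - b, f⟫ = 0) :
    ∀ f ∈ K, ⟪a - b, f⟫ = 0 := by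
  intro f hf
  have hab : a - b = (c - b) - (c - a) := by abel
  rw [hab, inner_sub_left, hb f hf, ha f (hKH hf), sub_zero]

theorem tendsto_of_inner_eq_zero_of_tendsto (K : ℕ → Submodule ℝ E) {x : E} {p φ : ℕ → E}
    (hp : ∀ k, p k ∈ K k) (horth : ∀ k, ∀ f ∈ K k, ⟪x - p k, f⟫ = 0)
    (hφ_mem : ∀ k, φ k ∈ K k) (hφ : Tendsto (fun k => ‖φ k - x‖) atTop (nhds 0)) :
    Tendsto p atTop (nhds x) := by
  rw [tendsto_iff_norm_sub_tendsto_zero]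
  refine squeeze_zero (fun _ => norm_nonneg _) (fun k => ?_) hφ
  rw [norm_sub_rev, norm_sub_rev (φ k)]
  exact norm_sub_le_norm_sub_of_inner_eq_zero (K k) (hp k) (horth k) (hφ_mem k)

theorem Filter.Tendsto.inv_norm_sq_smul {α : Type*} {l : Filter α} {u : α → E} {v : E}
    (hu : Tendsto u l (nhds v)) (hv : v ≠ 0) :
    Tendsto (fun a => (‖u a‖ ^ 2)⁻¹ • u a) l (nhds ((‖v‖ ^ 2)⁻¹ • v)) :=
  ((hu.norm.pow 2).inv₀ (pow_ne_zero 2 (norm_ne_zero_iff.2 hv))).smul hu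

end

theorem stmt_0_general {E : Type*} [NormedAddCommGroup E] [InnerProductSpace ℝ E]
    (H : Submodule ℝ E)
    (Hk : ℕ → Submodule ℝ E)
    (hle : ∀ k, Hk k ≤ H)
    (happrox : ∀ f ∈ H, ∃ φ : ℕ → E, (∀ k, φ k ∈ Hk k) ∧
      Tendsto (fun k => ‖φ k - f‖) atTop (nhds 0))
    (c : E) (hc : c ∉ H)
    (cbar : E) (hcbar_mem : cbar ∈ H) (hcbar : ∀ f ∈ H, ⟪c - cbar, f⟫ = 0)
    (cbark : ℕ → E) (hcbark_mem : ∀ k, cbark k ∈ Hk k)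
    (hcbark : ∀ k, ∀ f ∈ Hk k, ⟪c - cbark k, f⟫ = 0) :
    Tendsto (fun k =>
      ‖(‖c - cbark k‖ ^ 2)⁻¹ • (c - cbark k) - (‖c - cbar‖ ^ 2)⁻¹ • (c - cbar)‖)
      atTop (nhds 0) := by
  obtain ⟨φ, hφ_mem, hφ⟩ := happrox cbar hcbar_mem
  have hproj : Tendsto cbark atTop (nhds cbar) :=
    tendsto_of_inner_eq_zero_of_tendsto Hk hcbark_mem
      (fun k => inner_sub_eq_zero_of_le (hle k) hcbar (hcbark k)) hφ_mem hφ
  have hne : c - cbar ≠ 0 := sub_ne_zero.2 fun h => hc (h ▸ hcbar_mem)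
  exact tendsto_iff_norm_sub_tendsto_zero.1 ((tendsto_const_nhds.sub hproj).inv_norm_sq_smul hne)

/-- Convergence of approximate ratio functions `q_k` to `q` in a
real Hilbert space, where `c̄` (resp. `c̄_k`) is the orthogonal projection of `c`
onto a closed subspace `H` (resp. onto closed subspaces `H_k ≤ H` with `H_k → H`). -/
theorem stmt_0 {E : Type*} [NormedAddCommGroup E] [InnerProductSpace ℝ E] [CompleteSpace E]
    (H : Submodule ℝ E) (hH : IsClosed (H : Set E))
    (Hk : ℕ → Submodule ℝ E) (hHk : ∀ k, IsClosed ((Hk k : Set E)))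
    (hle : ∀ k, Hk k ≤ H)
    (happrox : ∀ f ∈ H, ∃ φ : ℕ → E, (∀ k, φ k ∈ Hk k) ∧
      Tendsto (fun k => ‖φ k - f‖) atTop (nhds 0))
    (c : E) (hc : c ∉ H)
    (cbar : E) (hcbar_mem : cbar ∈ H) (hcbar : ∀ f ∈ H, ⟪c - cbar, f⟫ = 0)
    (cbark : ℕ → E) (hcbark_mem : ∀ k, cbark k ∈ Hk k)
    (hcbark : ∀ k, ∀ f ∈ Hk k, ⟪c - cbark k, f⟫ = 0) :
    Tendsto (fun k =>
      ‖(‖c - cbark k‖ ^ 2)⁻¹ • (c - cbark k) - (‖c - cbar‖ ^ 2)⁻¹ • (c - cbar)‖)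
      atTop (nhds 0) :=
  stmt_0_general H Hk hle happrox c hc cbar hcbar_mem hcbar cbark hcbark_mem hcbark
end

section
/- Let d ∈ ℕ. Let p ∈ ℝ^d satisfy p_j ≥ 0 for all j and Σ_{j=1}^d p_j = 1. Let P ∈ ℝ^{d×d} satisfy P_{jℓ} ≥ 0 for all j, ℓ, Σ_{ℓ=1}^d P_{jℓ} ≤ 1 for all j, and let I − P be invertible. Let ν, γ ∈ ℝ^d have all entries strictly positive, and let ρ > 0, μ > 0, and c_a² ≥ 0 be real constants. For j = 1, …, d let p^j denote the j-th column of P' (the j-th row of P as a column vector), and define the d×d matrices H⁰ = diag(p) − pp' and H^j = diag(p^j) − p^j (p^j)'. Then the matrix Σ = ρμ(c_a² pp' + H⁰) + (ρ∧1)( Σ_{j=1}^d ν_j γ_j H^j + (I−P') diag(ν) diag(γ) (I−P) ) is symmetric positive definite. -/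
/-!
Each summand of `Σ` is positive semidefinite: `pp'` trivially, and `diag(q) - qq'` for any
sub-probability vector `q` because, by Cauchy–Schwarz, `(∑ qᵢxᵢ)² ≤ (∑ qᵢ)(∑ qᵢxᵢ²) ≤ ∑ qᵢxᵢ²`.
Strict positivity comes from the last term alone: it is the congruence of the positive diagonal
matrix `diag(ν) diag(γ)` by the invertible matrix `I - P`.
-/

open Matrix

variable {n : Type*} [Fintype n]

lemma Matrix.posSemidef_vecMulVec_self (v : n → ℝ) : (vecMulVec v v).PosSemidef := by
  simpa using posSemidef_vecMulVec_self_star v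

variable [DecidableEq n]

lemma Matrix.dotProduct_diagonal_sub_vecMulVec_mulVec (q x : n → ℝ) :
    x ⬝ᵥ (diagonal q - vecMulVec q q) *ᵥ x = ∑ i, q i * x i ^ 2 - (∑ i, q i * x i) ^ 2 := by
  rw [sub_mulVec, dotProduct_sub, vecMulVec_mulVec, dotProduct_smul]
  simp only [dotProduct, mulVec_diagonal, op_smul_eq_smul, smul_eq_mul, sq, Finset.sum_mul,
    mul_comm (x _) (q _)]
  congr 1
  exact Finset.sum_congr rfl fun i _ => by ring

lemma Matrix.posSemidef_diagonal_sub_vecMulVec {q : n → ℝ} (hq : ∀ i, 0 ≤ q i)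
    (hq_sum : ∑ i, q i ≤ 1) : (diagonal q - vecMulVec q q).PosSemidef := by
  refine PosSemidef.of_dotProduct_mulVec_nonneg
    ((isHermitian_diagonal q).sub (posSemidef_vecMulVec_self q).isHermitian) fun x => ?_
  have hweighted : 0 ≤ ∑ i, q i * x i ^ 2 :=
    Finset.sum_nonneg fun i _ => by have := hq i; positivity
  have hcauchy : (∑ i, q i * x i) ^ 2 ≤ (∑ i, q i) * ∑ i, q i * x i ^ 2 :=
    Finset.sum_sq_le_sum_mul_sum_of_sq_le_mul _ (fun i _ => hq i)
      (fun i _ => by have := hq i; positivity) fun i _ => le_of_eq (by ring)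
  rw [star_trivial, dotProduct_diagonal_sub_vecMulVec_mulVec, sub_nonneg]
  exact hcauchy.trans (mul_le_of_le_one_left hweighted hq_sum)

lemma Matrix.posDef_transpose_mul_diagonal_mul {B : Matrix n n ℝ} (hB : IsUnit B) {q : n → ℝ}
    (hq : ∀ i, 0 < q i) : (Bᵀ * diagonal q * B).PosDef := by
  simpa using (PosDef.diagonal hq).conjTranspose_mul_mul_same (mulVec_injective_of_isUnit hB)

/-- the constant covariance matrix (eq:covariance)
`Σ = ρμ(c_a² pp' + H⁰) + (ρ∧1)(∑ⱼ νⱼγⱼ Hʲ + (I−P') diag(ν) diag(γ) (I−P))`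
of the diffusion models is symmetric positive definite, where
`H⁰ = diag(p) − pp'` and `Hʲ = diag(pʲ) − pʲ(pʲ)'` with `pʲ` the `j`-th column of `P'`. -/
theorem stmt_6 (d : ℕ) (p : Fin d → ℝ) (hp_nonneg : ∀ j, 0 ≤ p j)
    (hp_sum : ∑ j, p j = 1)
    (P : Matrix (Fin d) (Fin d) ℝ) (hP_nonneg : ∀ j ℓ, 0 ≤ P j ℓ)
    (hP_sub : ∀ j, ∑ ℓ, P j ℓ ≤ 1) (hP_inv : IsUnit (1 - P))
    (ν γ : Fin d → ℝ) (hν : ∀ j, 0 < ν j) (hγ : ∀ j, 0 < γ j)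
    (ρ μ ca2 : ℝ) (hρ : 0 < ρ) (hμ : 0 < μ) (hca2 : 0 ≤ ca2) :
    ((ρ * μ) • (ca2 • vecMulVec p p + (diagonal p - vecMulVec p p))
      + (min ρ 1) •
        ((∑ j, (ν j * γ j) •
            (diagonal (fun ℓ => P j ℓ) - vecMulVec (fun ℓ => P j ℓ) (fun ℓ => P j ℓ)))
          + (1 - Pᵀ) * diagonal ν * diagonal γ * (1 - P))).PosDef := by
  have harrival : (ca2 • vecMulVec p p + (diagonal p - vecMulVec p p)).PosSemidef :=
    ((posSemidef_vecMulVec_self p).smul hca2).add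
      (posSemidef_diagonal_sub_vecMulVec hp_nonneg hp_sum.le)
  have hrouting : (∑ j, (ν j * γ j) •
      (diagonal (fun ℓ => P j ℓ) - vecMulVec (fun ℓ => P j ℓ) (fun ℓ => P j ℓ))).PosSemidef :=
    posSemidef_sum _ fun j _ =>
      (posSemidef_diagonal_sub_vecMulVec (hP_nonneg j) (hP_sub j)).smul (mul_pos (hν j) (hγ j)).le
  have hservice : ((1 - Pᵀ) * diagonal ν * diagonal γ * (1 - P)).PosDef := by
    rw [mul_assoc (1 - Pᵀ), diagonal_mul_diagonal, show 1 - Pᵀ = (1 - P)ᵀ by simp]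
    exact posDef_transpose_mul_diagonal_mul hP_inv fun i => mul_pos (hν i) (hγ i)
  exact PosDef.posSemidef_add (harrival.smul (by positivity)) <|
    (PosDef.posSemidef_add hrouting hservice).smul (lt_min hρ one_pos)
end

section
/- Let μ > 0, α > 0, c_a² ≥ 0, and β ∈ ℝ. Define b : ℝ → ℝ by b(z) = −βμ − μz for z < 0 and b(z) = −βμ − αz for z ≥ 0, and set a² = μ(1 + c_a²). Let a₃ > 0 and a₄ > 0 satisfy a₃ exp(−β²/(1+c_a²)) = a₄ exp(−μβ²/(α(1+c_a²))), and define g : ℝ → (0,∞) by g(z) = a₃ exp(−(z+β)²/(1+c_a²)) for z < 0 and g(z) = a₄ exp(−α(z + α^{-1}μβ)²/(μ(1+c_a²))) for z ≥ 0. Then for every bounded, twice continuously differentiable function f : ℝ → ℝ with bounded first and second derivatives, ∫_ℝ ( b(z) f′(z) + (a²/2) f″(z) ) g(z) dz = 0. -/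
/-!
On each half-line the density is a Gaussian `exp (-(z + m) ^ 2 / k)` whose logarithmic
derivative is `2 b / a²`, so `(b f' + a² / 2 f'') g = a² / 2 (f' g)'` there. Integrating over
each half-line, the boundary terms at `±∞` vanish by Gaussian decay, leaving `a² / 2 f'(0) g(0⁻)`
and `-a² / 2 f'(0) g(0⁺)`, which cancel because the condition on `a₃, a₄` makes `g` continuous
at `0`.
-/

open MeasureTheory Real Filter Set Topology

section GaussianWeight

variable {k : ℝ}

lemma integrable_exp_neg_add_sq_div (m : ℝ) (hk : 0 < k) :
    Integrable fun z : ℝ => exp (-(z + m) ^ 2 / k) := by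
  refine ((integrable_exp_neg_mul_sq (inv_pos.2 hk)).comp_add_right m).congr
    (.of_forall fun z => ?_)
  ring_nf

lemma integrable_add_mul_exp_neg_add_sq_div (m : ℝ) (hk : 0 < k) :
    Integrable fun z : ℝ => (z + m) * exp (-(z + m) ^ 2 / k) := by
  refine ((integrable_mul_exp_neg_mul_sq (inv_pos.2 hk)).comp_add_right m).congr
    (.of_forall fun z => ?_)
  ring_nf

lemma tendsto_exp_neg_add_sq_div_cocompact (m : ℝ) (hk : 0 < k) :
    Tendsto (fun z : ℝ => exp (-(z + m) ^ 2 / k)) (cocompact ℝ) (𝓝 0) := by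
  have h := (tendsto_rpow_abs_mul_exp_neg_mul_sq_cocompact (inv_pos.2 hk) 0).comp
    (Homeomorph.addRight m).isClosedEmbedding.tendsto_cocompact
  refine h.congr fun z => ?_
  simp only [Function.comp_apply, Homeomorph.coe_addRight, rpow_zero, one_mul]
  ring_nf

variable {h : ℝ → ℝ} {M M' : ℝ}

lemma hasDerivAt_mul_exp_neg_add_sq_div (hd : Differentiable ℝ h) (m z : ℝ) :
    HasDerivAt (fun z => h z * exp (-(z + m) ^ 2 / k))
      ((deriv h z - 2 * (z + m) / k * h z) * exp (-(z + m) ^ 2 / k)) z := by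
  have hq : HasDerivAt (fun z => -(z + m) ^ 2 / k) (-(2 * (z + m)) / k) z := by
    simpa using (((hasDerivAt_id z).add_const m).pow 2).neg.div_const k
  refine ((hd z).hasDerivAt.mul hq.exp).congr_deriv ?_
  ring

lemma integrable_deriv_mul_exp_neg_add_sq_div (hd : Differentiable ℝ h)
    (hM : ∀ z, |h z| ≤ M) (hM' : ∀ z, |deriv h z| ≤ M') (m : ℝ) (hk : 0 < k) :
    Integrable fun z => (deriv h z - 2 * (z + m) / k * h z) * exp (-(z + m) ^ 2 / k) := by
  have h₁ : Integrable fun z => deriv h z * exp (-(z + m) ^ 2 / k) :=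
    (integrable_exp_neg_add_sq_div m hk).bdd_mul (measurable_deriv h).aestronglyMeasurable
      (.of_forall hM')
  have h₂ : Integrable fun z => (2 / k * h z) * ((z + m) * exp (-(z + m) ^ 2 / k)) :=
    (integrable_add_mul_exp_neg_add_sq_div m hk).bdd_mul (c := |2 / k| * M)
      (continuous_const.mul hd.continuous).aestronglyMeasurable
      (.of_forall fun z => by
        rw [norm_mul, Real.norm_eq_abs]
        exact mul_le_mul_of_nonneg_left (hM z) (abs_nonneg _))
  refine (h₁.sub h₂).congr (.of_forall fun z => ?_)
  simp only [Pi.sub_apply]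
  ring

lemma tendsto_mul_exp_neg_add_sq_div_cocompact (hM : ∀ z, |h z| ≤ M) (m : ℝ) (hk : 0 < k) :
    Tendsto (fun z => h z * exp (-(z + m) ^ 2 / k)) (cocompact ℝ) (𝓝 0) := by
  have := (tendsto_exp_neg_add_sq_div_cocompact m hk).zero_mul_isBoundedUnder_le
    (g := h) (isBoundedUnder_of ⟨M, fun z => hM z⟩)
  simpa only [mul_comm] using this

lemma integral_Iio_deriv_mul_exp_neg_add_sq_div (hd : Differentiable ℝ h)
    (hM : ∀ z, |h z| ≤ M) (hM' : ∀ z, |deriv h z| ≤ M') (m : ℝ) (hk : 0 < k) (a : ℝ) :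
    ∫ z in Iio a, (deriv h z - 2 * (z + m) / k * h z) * exp (-(z + m) ^ 2 / k)
      = h a * exp (-(a + m) ^ 2 / k) := by
  rw [← integral_Iic_eq_integral_Iio, integral_Iic_of_hasDerivAt_of_tendsto'
    (fun z _ => hasDerivAt_mul_exp_neg_add_sq_div hd m z)
    (integrable_deriv_mul_exp_neg_add_sq_div hd hM hM' m hk).integrableOn
    ((tendsto_mul_exp_neg_add_sq_div_cocompact hM m hk).mono_left atBot_le_cocompact), sub_zero]

lemma integral_Ioi_deriv_mul_exp_neg_add_sq_div (hd : Differentiable ℝ h)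
    (hM : ∀ z, |h z| ≤ M) (hM' : ∀ z, |deriv h z| ≤ M') (m : ℝ) (hk : 0 < k) (a : ℝ) :
    ∫ z in Ioi a, (deriv h z - 2 * (z + m) / k * h z) * exp (-(z + m) ^ 2 / k)
      = -(h a * exp (-(a + m) ^ 2 / k)) := by
  rw [integral_Ioi_of_hasDerivAt_of_tendsto'
    (fun z _ => hasDerivAt_mul_exp_neg_add_sq_div hd m z)
    (integrable_deriv_mul_exp_neg_add_sq_div hd hM hM' m hk).integrableOn
    ((tendsto_mul_exp_neg_add_sq_div_cocompact hM m hk).mono_left atTop_le_cocompact), zero_sub]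

lemma integral_eq_of_eqOn_Iio_Ioi {F : ℝ → ℝ} {m₁ m₂ k₁ k₂ C₁ C₂ : ℝ} (a : ℝ)
    (hd : Differentiable ℝ h) (hM : ∀ z, |h z| ≤ M) (hM' : ∀ z, |deriv h z| ≤ M')
    (hk₁ : 0 < k₁) (hk₂ : 0 < k₂)
    (hF₁ : EqOn F (fun z => C₁ *
      ((deriv h z - 2 * (z + m₁) / k₁ * h z) * exp (-(z + m₁) ^ 2 / k₁))) (Iio a))
    (hF₂ : EqOn F (fun z => C₂ *
      ((deriv h z - 2 * (z + m₂) / k₂ * h z) * exp (-(z + m₂) ^ 2 / k₂))) (Ioi a)) :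
    ∫ z, F z = h a * (C₁ * exp (-(a + m₁) ^ 2 / k₁) - C₂ * exp (-(a + m₂) ^ 2 / k₂)) := by
  have hI₁ := (integrable_deriv_mul_exp_neg_add_sq_div hd hM hM' m₁ hk₁).const_mul C₁
  have hI₂ := (integrable_deriv_mul_exp_neg_add_sq_div hd hM hM' m₂ hk₂).const_mul C₂
  have hF_Iic : IntegrableOn F (Iic a) := (integrableOn_Iic_iff_integrableOn_Iio).2 <|
    hI₁.integrableOn.congr_fun hF₁.symm measurableSet_Iio
  have hF_Ioi : IntegrableOn F (Ioi a) := hI₂.integrableOn.congr_fun hF₂.symm measurableSet_Ioi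
  rw [← intervalIntegral.integral_Iic_add_Ioi hF_Iic hF_Ioi, integral_Iic_eq_integral_Iio,
    setIntegral_congr_fun measurableSet_Iio hF₁, setIntegral_congr_fun measurableSet_Ioi hF₂,
    integral_const_mul, integral_const_mul,
    integral_Iio_deriv_mul_exp_neg_add_sq_div hd hM hM' m₁ hk₁,
    integral_Ioi_deriv_mul_exp_neg_add_sq_div hd hM hM' m₂ hk₂]
  ring

end GaussianWeight

theorem stmt_12_general (μ α ca2 β : ℝ) (hμ : 0 < μ) (hα : 0 < α) (hca2 : 0 ≤ ca2)
    (b g : ℝ → ℝ)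
    (hb_neg : ∀ z, z < 0 → b z = -β * μ - μ * z)
    (hb_nonneg : ∀ z, 0 ≤ z → b z = -β * μ - α * z)
    (a3 a4 : ℝ)
    (hcont : a3 * Real.exp (-β ^ 2 / (1 + ca2))
      = a4 * Real.exp (-(μ * β ^ 2) / (α * (1 + ca2))))
    (hg_neg : ∀ z, z < 0 → g z = a3 * Real.exp (-(z + β) ^ 2 / (1 + ca2)))
    (hg_nonneg : ∀ z, 0 ≤ z →
      g z = a4 * Real.exp (-(α * (z + α⁻¹ * μ * β) ^ 2) / (μ * (1 + ca2))))
    (f : ℝ → ℝ) (hf : ContDiff ℝ 2 f) (Mf : ℝ)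
    (hf1 : ∀ z, |deriv f z| ≤ Mf)
    (hf2 : ∀ z, |deriv (deriv f) z| ≤ Mf) :
    ∫ z, (b z * deriv f z + μ * (1 + ca2) / 2 * deriv (deriv f) z) * g z = 0 := by
  set c := 1 + ca2
  set F := fun z => (b z * deriv f z + μ * c / 2 * deriv (deriv f) z) * g z
  set m := α⁻¹ * μ * β
  set k := μ * c / α
  have hc : 0 < c := by positivity
  have hk : 0 < k := by positivity
  have hd : Differentiable ℝ (deriv f) :=
    (contDiff_succ_iff_deriv.mp hf).2.2.differentiable one_ne_zero
  have hF_neg : EqOn F (fun z => μ * c / 2 * a3 *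
      ((deriv (deriv f) z - 2 * (z + β) / c * deriv f z) * exp (-(z + β) ^ 2 / c))) (Iio 0) := by
    intro z hz
    simp only [F, hb_neg z hz, hg_neg z hz]
    field_simp
    ring
  have hF_pos : EqOn F (fun z => μ * c / 2 * a4 *
      ((deriv (deriv f) z - 2 * (z + m) / k * deriv f z) * exp (-(z + m) ^ 2 / k))) (Ioi 0) := by
    intro z hz
    simp only [F, hb_nonneg z hz.le, hg_nonneg z hz.le, m, k]
    field_simp
    ring
  have hg_cont : a3 * exp (-(0 + β) ^ 2 / c) = a4 * exp (-(0 + m) ^ 2 / k) := by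
    have hexp : -m ^ 2 / k = -(μ * β ^ 2) / (α * c) := by
      simp only [m, k]
      field_simp
    rw [zero_add, zero_add, hexp]
    exact hcont
  rw [integral_eq_of_eqOn_Iio_Ioi 0 hd hf1 hf2 hc hk hF_neg hF_pos,
    mul_assoc (μ * c / 2), mul_assoc (μ * c / 2),
    hg_cont, sub_self, mul_zero]

/-- the piecewise normal density (eq:GMnGI) satisfies the basic
adjoint relationship (eq:bar_density) for the one-dimensional piecewise
Ornstein–Uhlenbeck process with drift `b` and diffusion variance `a² = μ(1+c_a²)`. -/
theorem stmt_12 (μ α ca2 β : ℝ) (hμ : 0 < μ) (hα : 0 < α) (hca2 : 0 ≤ ca2)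
    (b g : ℝ → ℝ)
    (hb_neg : ∀ z, z < 0 → b z = -β * μ - μ * z)
    (hb_nonneg : ∀ z, 0 ≤ z → b z = -β * μ - α * z)
    (a3 a4 : ℝ) (ha3 : 0 < a3) (ha4 : 0 < a4)
    (hcont : a3 * Real.exp (-β ^ 2 / (1 + ca2))
      = a4 * Real.exp (-(μ * β ^ 2) / (α * (1 + ca2))))
    (hg_neg : ∀ z, z < 0 → g z = a3 * Real.exp (-(z + β) ^ 2 / (1 + ca2)))
    (hg_nonneg : ∀ z, 0 ≤ z →
      g z = a4 * Real.exp (-(α * (z + α⁻¹ * μ * β) ^ 2) / (μ * (1 + ca2))))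
    (f : ℝ → ℝ) (hf : ContDiff ℝ 2 f) (Mf : ℝ)
    (hf0 : ∀ z, |f z| ≤ Mf) (hf1 : ∀ z, |deriv f z| ≤ Mf)
    (hf2 : ∀ z, |deriv (deriv f) z| ≤ Mf) :
    ∫ z, (b z * deriv f z + μ * (1 + ca2) / 2 * deriv (deriv f) z) * g z = 0 :=
  stmt_12_general μ α ca2 β hμ hα hca2 b g hb_neg hb_nonneg a3 a4 hcont hg_neg hg_nonneg f hf Mf hf1
    hf2
end

section
/- Let μ > 0, c_a² ≥ 0, and β > 0. Define b : ℝ → ℝ by b(z) = −βμ − μz for z < 0 and b(z) = −βμ for z ≥ 0, and set a² = μ(1 + c_a²). Let a₁ > 0 and a₂ > 0 satisfy a₂ = a₁ exp(−β²/(1+c_a²)), and define g : ℝ → (0,∞) by g(z) = a₁ exp(−(z+β)²/(1+c_a²)) for z < 0 and g(z) = a₂ exp(−2βz/(1+c_a²)) for z ≥ 0. Then for every bounded, twice continuously differentiable function f : ℝ → ℝ with bounded first and second derivatives, ∫_ℝ ( b(z) f′(z) + (a²/2) f″(z) ) g(z) dz = 0. -/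
open MeasureTheory Real Filter Set Topology

/-! With `c = a²/2`, the density satisfies `(c g)' = b g` on all of `ℝ`: writing
`g = a₁ exp (-V / (1 + c_a²))` with the `C¹` potential `V z = (z + β)² - (max z 0)²`, whose
derivative is `2 (β + min z 0)`, the drift is `b = -μ (β + min z 0) = -(μ / 2) V'`, and the
continuity condition `a₂ = a₁ exp (-β² / (1 + c_a²))` is exactly what makes `g` of this form.
Hence `(b f' + c f'') g = (f' · c g)'`, and the integral of this derivative vanishes because
`f' · c g` is integrable: `f'` is bounded and `g` decays like a Gaussian on the left and
exponentially on the right. -/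

noncomputable def hwPotential (β z : ℝ) : ℝ := (z + β) ^ 2 - max z 0 ^ 2

lemma hwPotential_of_nonpos {β z : ℝ} (hz : z ≤ 0) : hwPotential β z = (z + β) ^ 2 := by
  simp [hwPotential, max_eq_right hz]

lemma hwPotential_of_nonneg {β z : ℝ} (hz : 0 ≤ z) :
    hwPotential β z = β ^ 2 + 2 * β * z := by
  rw [hwPotential, max_eq_left hz]
  ring

lemma continuous_hwPotential (β : ℝ) : Continuous (hwPotential β) := by
  unfold hwPotential
  fun_prop

lemma hasDerivAt_hwPotential (β z : ℝ) :
    HasDerivAt (hwPotential β) (2 * (β + min z 0)) z := by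
  refine hasDerivAt_of_hasDerivAt_of_ne' (x := 0) (g := fun y => 2 * (β + min y 0))
    (fun y hy => ?_) (continuous_hwPotential β).continuousAt (by fun_prop) z
  rcases hy.lt_or_gt with hy | hy
  · have hV : (fun x => (x + β) ^ 2) =ᶠ[𝓝 y] hwPotential β := by
      filter_upwards [Iic_mem_nhds hy] with x hx using (hwPotential_of_nonpos hx).symm
    refine (((hasDerivAt_id y).add_const β).pow 2).congr_of_eventuallyEq hV.symm |>.congr_deriv ?_
    simp only [min_eq_left hy.le, id_eq]
    ring
  · have hV : (fun x => β ^ 2 + 2 * β * x) =ᶠ[𝓝 y] hwPotential β := by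
      filter_upwards [Ici_mem_nhds hy] with x hx using (hwPotential_of_nonneg hx).symm
    refine (((hasDerivAt_id y).const_mul (2 * β)).const_add (β ^ 2)).congr_of_eventuallyEq
      hV.symm |>.congr_deriv ?_
    simp [min_eq_right hy.le]

lemma integrable_exp_neg_hwPotential_div {β k : ℝ} (hβ : 0 < β) (hk : 0 < k) :
    Integrable fun z => exp (-hwPotential β z / k) := by
  rw [← integrableOn_univ, ← Iic_union_Ioi (a := 0)]
  refine IntegrableOn.union ?_ ?_
  · refine ((integrable_exp_neg_mul_sq (inv_pos.2 hk)).comp_add_right β).integrableOn.congr_fun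
      (fun z hz => ?_) measurableSet_Iic
    simp only [hwPotential_of_nonpos (mem_Iic.1 hz)]
    ring_nf
  · have hr : 0 < 2 * β / k := by positivity
    refine IntegrableOn.congr_fun ((exp_neg_integrableOn_Ioi 0 hr).const_mul (exp (-β ^ 2 / k)))
      (fun z hz => ?_) measurableSet_Ioi
    simp only [hwPotential_of_nonneg (le_of_lt (mem_Ioi.1 hz)), ← exp_add]
    ring_nf

lemma integrable_add_min_mul_exp_neg_hwPotential_div {β k : ℝ} (hβ : 0 < β) (hk : 0 < k) :
    Integrable fun z => (β + min z 0) * exp (-hwPotential β z / k) := by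
  rw [← integrableOn_univ, ← Iic_union_Ioi (a := 0)]
  refine IntegrableOn.union ?_ ?_
  · refine ((integrable_mul_exp_neg_mul_sq (inv_pos.2 hk)).comp_add_right β).integrableOn
      |>.congr_fun (fun z hz => ?_) measurableSet_Iic
    simp only [hwPotential_of_nonpos (mem_Iic.1 hz), min_eq_left (mem_Iic.1 hz)]
    ring_nf
  · refine ((integrable_exp_neg_hwPotential_div hβ hk).const_mul β).integrableOn.congr_fun
      (fun z hz => ?_) measurableSet_Ioi
    simp only [min_eq_right (le_of_lt (mem_Ioi.1 hz)), add_zero]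

lemma hasDerivAt_mul_exp_neg_div {V V' : ℝ → ℝ} (hV : ∀ z, HasDerivAt V (V' z) z)
    (a c k z : ℝ) :
    HasDerivAt (fun z => c * (a * exp (-V z / k))) (-(c / k) * V' z * (a * exp (-V z / k))) z :=
  (((hV z).neg.div_const k).exp.const_mul a |>.const_mul c).congr_deriv
    (by simp only [Pi.neg_apply]; ring)

theorem integral_generator_mul_eq_zero {b g f : ℝ → ℝ} {c M : ℝ}
    (hg : ∀ z, HasDerivAt (fun z => c * g z) (b z * g z) z) (hg_int : Integrable g)
    (hbg_int : Integrable fun z => b z * g z) (hf : Differentiable ℝ (deriv f))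
    (hf1 : ∀ z, |deriv f z| ≤ M) (hf2 : ∀ z, |deriv (deriv f) z| ≤ M) :
    ∫ z, (b z * deriv f z + c * deriv (deriv f) z) * g z = 0 := by
  have hF : ∀ z, HasDerivAt (fun z => deriv f z * (c * g z))
      ((b z * deriv f z + c * deriv (deriv f) z) * g z) z := fun z =>
    ((hf z).hasDerivAt.mul (hg z)).congr_deriv (by ring)
  have hF_int : Integrable fun z => deriv f z * (c * g z) :=
    (hg_int.const_mul c).bdd_mul (measurable_deriv f).aestronglyMeasurable (ae_of_all _ hf1)
  have hF'_int : Integrable fun z => (b z * deriv f z + c * deriv (deriv f) z) * g z := by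
    refine (hbg_int.bdd_mul (measurable_deriv f).aestronglyMeasurable (ae_of_all _ hf1)).add
      ((hg_int.const_mul c).bdd_mul (measurable_deriv _).aestronglyMeasurable
        (ae_of_all _ hf2)) |>.congr (ae_of_all _ fun z => ?_)
    simp only [Pi.add_apply]
    ring
  exact integral_eq_zero_of_hasDerivAt_of_integrable hF hF'_int hF_int

theorem stmt_13_general (μ ca2 β : ℝ) (hca2 : 0 ≤ ca2) (hβ : 0 < β)
    (b g : ℝ → ℝ)
    (hb_neg : ∀ z, z < 0 → b z = -β * μ - μ * z)
    (hb_nonneg : ∀ z, 0 ≤ z → b z = -β * μ)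
    (a1 a2 : ℝ)
    (hcont : a2 = a1 * Real.exp (-β ^ 2 / (1 + ca2)))
    (hg_neg : ∀ z, z < 0 → g z = a1 * Real.exp (-(z + β) ^ 2 / (1 + ca2)))
    (hg_nonneg : ∀ z, 0 ≤ z → g z = a2 * Real.exp (-(2 * β * z) / (1 + ca2)))
    (f : ℝ → ℝ) (hf : ContDiff ℝ 2 f) (Mf : ℝ)
    (hf1 : ∀ z, |deriv f z| ≤ Mf)
    (hf2 : ∀ z, |deriv (deriv f) z| ≤ Mf) :
    ∫ z, (b z * deriv f z + μ * (1 + ca2) / 2 * deriv (deriv f) z) * g z = 0 := by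
  have hk : 0 < 1 + ca2 := by linarith
  have hb : b = fun z => -μ * (β + min z 0) := by
    funext z
    rcases lt_or_ge z 0 with hz | hz
    · rw [hb_neg z hz, min_eq_left hz.le]; ring
    · rw [hb_nonneg z hz, min_eq_right hz]; ring
  have hg : g = fun z => a1 * exp (-hwPotential β z / (1 + ca2)) := by
    funext z
    rcases lt_or_ge z 0 with hz | hz
    · rw [hg_neg z hz, hwPotential_of_nonpos hz.le]
    · rw [hg_nonneg z hz, hcont, hwPotential_of_nonneg hz, mul_assoc, ← exp_add]
      ring_nf
  subst hb hg
  refine integral_generator_mul_eq_zero (fun z => ?_)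
    ((integrable_exp_neg_hwPotential_div hβ hk).const_mul a1)
    (((integrable_add_min_mul_exp_neg_hwPotential_div hβ hk).const_mul (-μ * a1)).congr
      (ae_of_all _ fun z => by ring))
    hf.differentiable_deriv_two hf1 hf2
  refine (hasDerivAt_mul_exp_neg_div (hasDerivAt_hwPotential β) _ _ _ z).congr_deriv ?_
  field_simp

/-- the Halfin–Whitt piecewise density (eq:GMn) satisfies the basic
adjoint relationship for the one-dimensional diffusion limit of `GI/M/n` queues
without abandonment, with drift `b` and diffusion variance `a² = μ(1+c_a²)`. -/
theorem stmt_13 (μ ca2 β : ℝ) (hμ : 0 < μ) (hca2 : 0 ≤ ca2) (hβ : 0 < β)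
    (b g : ℝ → ℝ)
    (hb_neg : ∀ z, z < 0 → b z = -β * μ - μ * z)
    (hb_nonneg : ∀ z, 0 ≤ z → b z = -β * μ)
    (a1 a2 : ℝ) (ha1 : 0 < a1) (ha2 : 0 < a2)
    (hcont : a2 = a1 * Real.exp (-β ^ 2 / (1 + ca2)))
    (hg_neg : ∀ z, z < 0 → g z = a1 * Real.exp (-(z + β) ^ 2 / (1 + ca2)))
    (hg_nonneg : ∀ z, 0 ≤ z → g z = a2 * Real.exp (-(2 * β * z) / (1 + ca2)))
    (f : ℝ → ℝ) (hf : ContDiff ℝ 2 f) (Mf : ℝ)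
    (hf0 : ∀ z, |f z| ≤ Mf) (hf1 : ∀ z, |deriv f z| ≤ Mf)
    (hf2 : ∀ z, |deriv (deriv f) z| ≤ Mf) :
    ∫ z, (b z * deriv f z + μ * (1 + ca2) / 2 * deriv (deriv f) z) * g z = 0 :=
  stmt_13_general μ ca2 β hca2 hβ b g hb_neg hb_nonneg a1 a2 hcont hg_neg hg_nonneg f hf Mf hf1 hf2
end
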